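/- arXiv:1710.03418 — 7 statements merged into one kernel-verified Lean document; each statement's English description precedes it below -/
import Mathlib

section
/- Let $h$ be non-negative, supermultiplicative (i.e., $h(xy)\ge h(x)h(y)$ for all $x,y$ in its domain), $f:I\to(0,\infty)$ be $A_tG_h$-convex with $0\in I$ and $f(0)=1$. Then for all $x,y\in I$ and all $\alpha,\beta>0$ with $\alpha+\beta\le 1$: $f(\alpha x+\beta y)\le f(x)^{h(\alpha)} f(y)^{h(\beta)}$. -/
/-!
Write `α x + β y = s z + (1 - s) 0` with `s = α + β` and `z = (α / s) x + (β / s) y ∈ I`. Applying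
`A_tG_h`-convexity twice and `f 0 = 1` gives `f (α x + β y) ≤ f x ^ (h (α/s) h s) f y ^ (h (β/s) h s)`.
Convexity between `a` and `0` at `t = 0` forces `1 ≤ f a ^ h 0`, hence `1 ≤ f` on `I`, so the exponents
may be raised to `h α` and `h β` by supermultiplicativity.
-/

open Real Set

def IsAtGhConvex (I : Set ℝ) (h f : ℝ → ℝ) : Prop :=
  ∀ a ∈ I, ∀ b ∈ I, ∀ t ∈ Icc (0:ℝ) 1, f (t * a + (1 - t) * b) ≤ f a ^ h t * f b ^ h (1 - t)

namespace IsAtGhConvex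

variable {I : Set ℝ} {h f : ℝ → ℝ}

theorem one_le_of_map_zero (hf : IsAtGhConvex I h f) (h0 : (0:ℝ) ∈ I) (hf0 : f 0 = 1)
    (hh0 : 0 < h 0) {a : ℝ} (ha : a ∈ I) (hfa : 0 ≤ f a) : 1 ≤ f a := by
  have h1 : 1 ≤ f a ^ h 0 := by simpa [hf0] using hf a ha 0 h0 0 ⟨le_rfl, zero_le_one⟩
  by_contra! hlt
  exact (rpow_lt_one hfa hlt hh0).not_ge h1

theorem map_mul_le (hf : IsAtGhConvex I h f) (h0 : (0:ℝ) ∈ I) (hf0 : f 0 = 1)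
    {z : ℝ} (hz : z ∈ I) {s : ℝ} (hs : s ∈ Icc (0:ℝ) 1) : f (s * z) ≤ f z ^ h s := by
  simpa [hf0] using hf z hz 0 h0 s hs

end IsAtGhConvex

theorem rpow_rpow_le_of_mul_le {a p r q : ℝ} (ha : 1 ≤ a) (hpr : p * r ≤ q) :
    (a ^ p) ^ r ≤ a ^ q := by
  rw [← rpow_mul (zero_le_one.trans ha)]
  exact rpow_le_rpow_of_exponent_le ha hpr

theorem exists_mul_eq_of_add_le_one {α β : ℝ} (hα : 0 < α) (hβ : 0 < β) (hαβ : α + β ≤ 1) :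
    ∃ s ∈ Ioc (0:ℝ) 1, ∃ t ∈ Ioc (0:ℝ) 1, 1 - t ∈ Ioc (0:ℝ) 1 ∧ t * s = α ∧ (1 - t) * s = β := by
  have hs : 0 < α + β := by positivity
  refine ⟨α + β, ⟨hs, hαβ⟩, α / (α + β), ⟨by positivity, ?_⟩, ⟨?_, ?_⟩, ?_, ?_⟩
  · rw [div_le_one hs]; linarith
  · rw [sub_pos, div_lt_one hs]; linarith
  · have : 0 < α / (α + β) := by positivity
    linarith
  · field_simp
  · field_simp; ring

theorem AtGh_functional_inequality (I : Set ℝ) (h0 : (0:ℝ) ∈ I) (hIconv : Convex ℝ I)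
    (h : ℝ → ℝ) (hpos : ∀ t ∈ Icc (0:ℝ) 1, 0 < h t)
    (hsuper : ∀ x ∈ Ioc (0:ℝ) 1, ∀ y ∈ Ioc (0:ℝ) 1, h x * h y ≤ h (x * y))
    (f : ℝ → ℝ) (hfpos : ∀ x ∈ I, 0 < f x) (hf0 : f 0 = 1)
    (hconv : ∀ a ∈ I, ∀ b ∈ I, ∀ t ∈ Icc (0:ℝ) 1,
      f (t * a + (1 - t) * b) ≤ f a ^ h t * f b ^ h (1 - t)) :
    ∀ x ∈ I, ∀ y ∈ I, ∀ α β : ℝ, 0 < α → 0 < β → α + β ≤ 1 →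
      f (α * x + β * y) ≤ f x ^ h α * f y ^ h β := by
  have hf : IsAtGhConvex I h f := hconv
  have hone : ∀ a ∈ I, 1 ≤ f a := fun a ha =>
    hf.one_le_of_map_zero h0 hf0 (hpos 0 ⟨le_rfl, zero_le_one⟩) ha (hfpos a ha).le
  intro x hx y hy α β hα hβ hαβ
  obtain ⟨s, hs, t, ht, ht', rfl, rfl⟩ := exists_mul_eq_of_add_le_one hα hβ hαβ
  have hz : t * x + (1 - t) * y ∈ I := hIconv hx hy ht.1.le ht'.1.le (by ring)
  calc f (t * s * x + (1 - t) * s * y) = f (s * (t * x + (1 - t) * y)) := by ring_nf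
    _ ≤ f (t * x + (1 - t) * y) ^ h s := hf.map_mul_le h0 hf0 hz (Ioc_subset_Icc_self hs)
    _ ≤ (f x ^ h t * f y ^ h (1 - t)) ^ h s :=
      rpow_le_rpow (hfpos _ hz).le (hf x hx y hy t (Ioc_subset_Icc_self ht))
        (hpos s (Ioc_subset_Icc_self hs)).le
    _ = (f x ^ h t) ^ h s * (f y ^ h (1 - t)) ^ h s :=
      mul_rpow (rpow_nonneg (hfpos x hx).le _) (rpow_nonneg (hfpos y hy).le _)
    _ ≤ f x ^ h (t * s) * f y ^ h ((1 - t) * s) :=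
      mul_le_mul (rpow_rpow_le_of_mul_le (hone x hx) (hsuper t ht s hs))
        (rpow_rpow_le_of_mul_le (hone y hy) (hsuper (1 - t) ht' s hs))
        (rpow_nonneg (rpow_nonneg (hfpos y hy).le _) _) (rpow_nonneg (hfpos x hx).le _)
end

section
/- Let $h$ be non-negative supermultiplicative, $f:I\to[0,\infty)$ be $G_tA_h$-convex (i.e., $f(x^t y^{1-t})\le h(t)f(x)+h(1-t)f(y)$) with $1\in I$ and $f(1)=0$. Then for all $x,y\in I$ and all $\alpha,\beta>0$ with $\alpha+\beta\le 1$: $f(x^\alpha y^\beta)\le h(\alpha)f(x)+h(\beta)f(y)$. -/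
open Real Set

theorem GtAh_functional_inequality (I : Set ℝ) (hI : I ⊆ Ioi 0) (h1I : (1:ℝ) ∈ I)
    (hIgeo : ∀ x ∈ I, ∀ y ∈ I, ∀ t ∈ Icc (0:ℝ) 1, x ^ t * y ^ (1 - t) ∈ I)
    (hIpow : ∀ x ∈ I, ∀ l ∈ Ioc (0:ℝ) 1, x ^ l ∈ I)
    (h : ℝ → ℝ) (hpos : ∀ t ∈ Icc (0:ℝ) 1, 0 < h t)
    (hsuper : ∀ x ∈ Ioc (0:ℝ) 1, ∀ y ∈ Ioc (0:ℝ) 1, h x * h y ≤ h (x * y))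
    (f : ℝ → ℝ) (hfnonneg : ∀ x ∈ I, 0 ≤ f x) (hf1 : f 1 = 0)
    (hconv : ∀ x ∈ I, ∀ y ∈ I, ∀ t ∈ Icc (0:ℝ) 1,
      f (x ^ t * y ^ (1 - t)) ≤ h t * f x + h (1 - t) * f y) :
    ∀ x ∈ I, ∀ y ∈ I, ∀ α β : ℝ, 0 < α → 0 < β → α + β ≤ 1 →
      f (x ^ α * y ^ β) ≤ h α * f x + h β * f y := by
  intro x hx y hy α β hα hβ hab
  have hx0 : 0 < x := hI hx
  have hy0 : 0 < y := hI hy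
  set s := α + β with hs
  have hs0 : 0 < s := by positivity
  set t := α / s with htdef
  have ht0 : 0 < t := by positivity
  have ht1 : t < 1 := by rw [htdef, div_lt_one hs0]; linarith
  have hts : t * s = α := div_mul_cancel₀ α hs0.ne'
  have h1ts : (1 - t) * s = β := by
    have : (1 - t) * s = s - t * s := by ring
    rw [this, hts]; simp [hs]
  have hz : x ^ t * y ^ (1 - t) ∈ I := hIgeo x hx y hy t ⟨ht0.le, ht1.le⟩
  have key1 : f ((x ^ t * y ^ (1 - t)) ^ s) ≤ h s * f (x ^ t * y ^ (1 - t)) := by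
    have := hconv _ hz 1 h1I s ⟨hs0.le, hab⟩
    simpa [hf1] using this
  have key2 : f (x ^ t * y ^ (1 - t)) ≤ h t * f x + h (1 - t) * f y :=
    hconv x hx y hy t ⟨ht0.le, ht1.le⟩
  have heq : (x ^ t * y ^ (1 - t)) ^ s = x ^ α * y ^ β := by
    rw [Real.mul_rpow (by positivity) (by positivity), ← Real.rpow_mul hx0.le,
        ← Real.rpow_mul hy0.le, hts, h1ts]
  have hsm1 : h s * h t ≤ h α := by
    have := hsuper s ⟨hs0, hab⟩ t ⟨ht0, ht1.le⟩
    rwa [mul_comm s t, hts] at this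
  have hsm2 : h s * h (1 - t) ≤ h β := by
    have := hsuper s ⟨hs0, hab⟩ (1 - t) ⟨by linarith, by linarith⟩
    rwa [mul_comm s (1 - t), h1ts] at this
  have hhs : 0 < h s := hpos s ⟨hs0.le, hab⟩
  have hfx : 0 ≤ f x := hfnonneg x hx
  have hfy : 0 ≤ f y := hfnonneg y hy
  calc f (x ^ α * y ^ β) = f ((x ^ t * y ^ (1 - t)) ^ s) := by rw [heq]
    _ ≤ h s * f (x ^ t * y ^ (1 - t)) := key1
    _ ≤ h s * (h t * f x + h (1 - t) * f y) := by
        exact mul_le_mul_of_nonneg_left key2 hhs.le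
    _ = (h s * h t) * f x + (h s * h (1 - t)) * f y := by ring
    _ ≤ h α * f x + h β * f y := by
        gcongr <;> assumption
end

section
/- Let $h$ be non-negative supermultiplicative, $f:I\to(0,\infty)$ be $G_tG_h$-convex (i.e., $f(x^t y^{1-t})\le f(x)^{h(t)} f(y)^{h(1-t)}$) with $1\in I$ and $f(1)=1$. Then for all $x,y\in I$ and all $\alpha,\beta>0$ with $\alpha+\beta\le 1$: $f(x^\alpha y^\beta)\le f(x)^{h(\alpha)} f(y)^{h(\beta)}$. -/
/-!
Write `s = α + β` and `t = α / s`. Then `x ^ α * y ^ β = z ^ s * 1 ^ (1 - s)` with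
`z = x ^ t * y ^ (1 - t)`, so convexity at the pair `(z, 1)` together with `f 1 = 1` gives
`f (x ^ α * y ^ β) ≤ f z ^ h s`, and convexity at `(x, y)` bounds `f z`. The exponents that
result are `h t * h s ≤ h α` and `h (1 - t) * h s ≤ h β` by supermultiplicativity, and
enlarging them only increases the bound because `f ≥ 1`.
-/

open Real Set

def GtGhConvexOn (I : Set ℝ) (h f : ℝ → ℝ) : Prop :=
  ∀ x ∈ I, ∀ y ∈ I, ∀ t ∈ Icc (0:ℝ) 1,
    f (x ^ t * y ^ (1 - t)) ≤ f x ^ h t * f y ^ h (1 - t)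

lemma GtGhConvexOn.apply_rpow_le {I : Set ℝ} {h f : ℝ → ℝ} (hconv : GtGhConvexOn I h f)
    (h1I : (1:ℝ) ∈ I) (hf1 : f 1 = 1) {z : ℝ} (hz : z ∈ I) {s : ℝ} (hs : s ∈ Icc (0:ℝ) 1) :
    f (z ^ s) ≤ f z ^ h s := by
  simpa only [one_rpow, mul_one, hf1] using hconv z hz 1 h1I s hs

lemma rpow_mul_rpow_eq_rpow {x y : ℝ} (hx : 0 ≤ x) (hy : 0 ≤ y) (a b s : ℝ) :
    x ^ (a * s) * y ^ (b * s) = (x ^ a * y ^ b) ^ s := by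
  rw [mul_rpow (rpow_nonneg hx a) (rpow_nonneg hy b), rpow_mul hx, rpow_mul hy]

lemma rpow_mul_rpow_rpow_le {a b p q r P Q : ℝ} (ha : 1 ≤ a) (hb : 1 ≤ b)
    (hp : p * r ≤ P) (hq : q * r ≤ Q) :
    (a ^ p * b ^ q) ^ r ≤ a ^ P * b ^ Q := by
  rw [← rpow_mul_rpow_eq_rpow (by linarith) (by linarith)]
  gcongr

theorem GtGh_functional_inequality_general (I : Set ℝ) (hI : I ⊆ Ioi 0) (h1I : (1:ℝ) ∈ I)
    (hIgeo : ∀ x ∈ I, ∀ y ∈ I, ∀ t ∈ Icc (0:ℝ) 1, x ^ t * y ^ (1 - t) ∈ I)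
    (h : ℝ → ℝ) (hpos : ∀ t ∈ Icc (0:ℝ) 1, 0 < h t)
    (hsuper : ∀ x ∈ Ioc (0:ℝ) 1, ∀ y ∈ Ioc (0:ℝ) 1, h x * h y ≤ h (x * y))
    (f : ℝ → ℝ) (hfge : ∀ x ∈ I, 1 ≤ f x) (hf1 : f 1 = 1)
    (hconv : ∀ x ∈ I, ∀ y ∈ I, ∀ t ∈ Icc (0:ℝ) 1,
      f (x ^ t * y ^ (1 - t)) ≤ f x ^ h t * f y ^ h (1 - t)) :
    ∀ x ∈ I, ∀ y ∈ I, ∀ α β : ℝ, 0 < α → 0 < β → α + β ≤ 1 →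
      f (x ^ α * y ^ β) ≤ f x ^ h α * f y ^ h β := by
  intro x hx y hy α β hα hβ hαβ
  set s := α + β
  set t := α / s
  have hs : s ∈ Ioc (0:ℝ) 1 := ⟨by positivity, hαβ⟩
  have hts : t * s = α := div_mul_cancel₀ α hs.1.ne'
  have hts' : (1 - t) * s = β := by rw [sub_mul, hts, one_mul]; ring
  have ht : t ∈ Ioc (0:ℝ) 1 := ⟨by positivity, (div_le_one hs.1).2 (by linarith)⟩
  have ht' : 1 - t ∈ Ioc (0:ℝ) 1 := ⟨sub_pos.2 ((div_lt_one hs.1).2 (by linarith)), by linarith [ht.1]⟩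
  have hz : x ^ t * y ^ (1 - t) ∈ I := hIgeo x hx y hy t (Ioc_subset_Icc_self ht)
  calc f (x ^ α * y ^ β) = f ((x ^ t * y ^ (1 - t)) ^ s) := by
        rw [← rpow_mul_rpow_eq_rpow (hI hx).le (hI hy).le, hts, hts']
    _ ≤ f (x ^ t * y ^ (1 - t)) ^ h s :=
        GtGhConvexOn.apply_rpow_le hconv h1I hf1 hz (Ioc_subset_Icc_self hs)
    _ ≤ (f x ^ h t * f y ^ h (1 - t)) ^ h s :=
        rpow_le_rpow (zero_le_one.trans (hfge _ hz)) (hconv x hx y hy t (Ioc_subset_Icc_self ht))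
          (hpos s (Ioc_subset_Icc_self hs)).le
    _ ≤ f x ^ h α * f y ^ h β :=
        rpow_mul_rpow_rpow_le (hfge x hx) (hfge y hy)
          (hts ▸ hsuper t ht s hs) (hts' ▸ hsuper (1 - t) ht' s hs)

theorem GtGh_functional_inequality (I : Set ℝ) (hI : I ⊆ Ioi 0) (h1I : (1:ℝ) ∈ I)
    (hIgeo : ∀ x ∈ I, ∀ y ∈ I, ∀ t ∈ Icc (0:ℝ) 1, x ^ t * y ^ (1 - t) ∈ I)
    (hIpow : ∀ x ∈ I, ∀ l ∈ Ioc (0:ℝ) 1, x ^ l ∈ I)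
    (h : ℝ → ℝ) (hpos : ∀ t ∈ Icc (0:ℝ) 1, 0 < h t)
    (hsuper : ∀ x ∈ Ioc (0:ℝ) 1, ∀ y ∈ Ioc (0:ℝ) 1, h x * h y ≤ h (x * y))
    (f : ℝ → ℝ) (hfge : ∀ x ∈ I, 1 ≤ f x) (hf1 : f 1 = 1)
    (hconv : ∀ x ∈ I, ∀ y ∈ I, ∀ t ∈ Icc (0:ℝ) 1,
      f (x ^ t * y ^ (1 - t)) ≤ f x ^ h t * f y ^ h (1 - t)) :
    ∀ x ∈ I, ∀ y ∈ I, ∀ α β : ℝ, 0 < α → 0 < β → α + β ≤ 1 →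
      f (x ^ α * y ^ β) ≤ f x ^ h α * f y ^ h β :=
  GtGh_functional_inequality_general I hI h1I hIgeo h hpos hsuper f hfge hf1 hconv
end

section
/- Let $h$ be submultiplicative ($h(xy)\le h(x)h(y)$) and $f:I\to(0,\infty)$ be $A_tH_h$-convex. Then for all $x_1<x_2<x_3$ in $I$ with $x_2-x_1,x_3-x_2,x_3-x_1$ in the domain of $h$: $h(x_3-x_1)f(x_1)f(x_3)\ge h(x_2-x_1)f(x_1)f(x_2)+h(x_3-x_2)f(x_3)f(x_2)$. -/
/-!
Write `x₂ = t * x₁ + (1 - t) * x₃`, so that `x₂ - x₁ = (1 - t) * (x₃ - x₁)` and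
`x₃ - x₂ = t * (x₃ - x₁)`. Submultiplicativity bounds the left side by
`h (x₃ - x₁) * f x₂ * (h (1 - t) * f x₁ + h t * f x₃)`, and `A_tH_h`-convexity at `t`, with the
denominator cleared, bounds this by `h (x₃ - x₁) * f x₁ * f x₃`.
-/

open Set

def IsAtHhConvex (I : Set ℝ) (h f : ℝ → ℝ) : Prop :=
  ∀ a ∈ I, ∀ b ∈ I, ∀ t ∈ Icc (0:ℝ) 1,
    f (t * a + (1 - t) * b) ≤ f a * f b / (h (1 - t) * f a + h t * f b)

theorem exists_mem_Ioo_mul_add_one_sub_mul_eq {x y z : ℝ} (hxy : x < y) (hyz : y < z) :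
    ∃ t ∈ Ioo (0:ℝ) 1, t * x + (1 - t) * z = y := by
  obtain ⟨a, b, ha, hb, hab, rfl⟩ := Ioo_subset_openSegment (𝕜 := ℝ) ⟨hxy, hyz⟩
  obtain rfl : b = 1 - a := by linarith
  exact ⟨a, ⟨ha, by linarith⟩, rfl⟩

theorem IsAtHhConvex.apply_mul_le {I : Set ℝ} {h f : ℝ → ℝ} (hf : IsAtHhConvex I h f)
    (hpos : ∀ t > (0:ℝ), 0 < h t) (hfpos : ∀ x ∈ I, 0 < f x) {a b t : ℝ} (ha : a ∈ I)
    (hb : b ∈ I) (ht : t ∈ Ioo (0:ℝ) 1) :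
    f (t * a + (1 - t) * b) * (h (1 - t) * f a + h t * f b) ≤ f a * f b := by
  have hD : 0 < h (1 - t) * f a + h t * f b := by
    have := hpos (1 - t) (sub_pos.2 ht.2)
    have := hpos t ht.1
    have := hfpos a ha
    have := hfpos b hb
    positivity
  exact (le_div_iff₀ hD).1 (hf a ha b hb t (Ioo_subset_Icc_self ht))

theorem AtHh_three_point_inequality_general (I : Set ℝ)
    (h : ℝ → ℝ) (hpos : ∀ t > (0:ℝ), 0 < h t)
    (hsub : ∀ x > (0:ℝ), ∀ y > (0:ℝ), h (x * y) ≤ h x * h y)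
    (f : ℝ → ℝ) (hfpos : ∀ x ∈ I, 0 < f x)
    (hconv : ∀ a ∈ I, ∀ b ∈ I, ∀ t ∈ Icc (0:ℝ) 1,
      f (t * a + (1 - t) * b) ≤ f a * f b / (h (1 - t) * f a + h t * f b)) :
    ∀ x₁ ∈ I, ∀ x₂ ∈ I, ∀ x₃ ∈ I, x₁ < x₂ → x₂ < x₃ →
      h (x₂ - x₁) * f x₁ * f x₂ + h (x₃ - x₂) * f x₃ * f x₂ ≤
        h (x₃ - x₁) * f x₁ * f x₃ := by
  intro x₁ h₁ x₂ h₂ x₃ h₃ h12 h23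
  obtain ⟨t, ht, rfl⟩ := exists_mem_Ioo_mul_add_one_sub_mul_eq h12 h23
  have hL : 0 < x₃ - x₁ := by linarith
  have hleft : h (t * x₁ + (1 - t) * x₃ - x₁) ≤ h (1 - t) * h (x₃ - x₁) := by
    rw [show t * x₁ + (1 - t) * x₃ - x₁ = (1 - t) * (x₃ - x₁) by ring]
    exact hsub _ (sub_pos.2 ht.2) _ hL
  have hright : h (x₃ - (t * x₁ + (1 - t) * x₃)) ≤ h t * h (x₃ - x₁) := by
    rw [show x₃ - (t * x₁ + (1 - t) * x₃) = t * (x₃ - x₁) by ring]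
    exact hsub _ ht.1 _ hL
  have hmid := IsAtHhConvex.apply_mul_le hconv hpos hfpos h₁ h₃ ht
  have f₁ := hfpos x₁ h₁
  have f₂ := hfpos _ h₂
  have f₃ := hfpos x₃ h₃
  calc _ ≤ h (1 - t) * h (x₃ - x₁) * f x₁ * f (t * x₁ + (1 - t) * x₃)
          + h t * h (x₃ - x₁) * f x₃ * f (t * x₁ + (1 - t) * x₃) := by gcongr
    _ = h (x₃ - x₁) * (f (t * x₁ + (1 - t) * x₃) * (h (1 - t) * f x₁ + h t * f x₃)) := by ring
    _ ≤ h (x₃ - x₁) * f x₁ * f x₃ := by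
      rw [mul_assoc _ (f x₁)]
      exact mul_le_mul_of_nonneg_left hmid (hpos _ hL).le

theorem AtHh_three_point_inequality (I : Set ℝ) (hI : I ⊆ Ioi 0)
    (h : ℝ → ℝ) (hpos : ∀ t > (0:ℝ), 0 < h t)
    (hsub : ∀ x > (0:ℝ), ∀ y > (0:ℝ), h (x * y) ≤ h x * h y)
    (f : ℝ → ℝ) (hfpos : ∀ x ∈ I, 0 < f x)
    (hconv : ∀ a ∈ I, ∀ b ∈ I, ∀ t ∈ Icc (0:ℝ) 1,
      f (t * a + (1 - t) * b) ≤ f a * f b / (h (1 - t) * f a + h t * f b)) :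
    ∀ x₁ ∈ I, ∀ x₂ ∈ I, ∀ x₃ ∈ I, x₁ < x₂ → x₂ < x₃ →
      h (x₂ - x₁) * f x₁ * f x₂ + h (x₃ - x₂) * f x₃ * f x₂ ≤
        h (x₃ - x₁) * f x₁ * f x₃ :=
  AtHh_three_point_inequality_general I h hpos hsub f hfpos hconv
end

section
/- Let $h$ be supermultiplicative and $f:I\to(0,\infty)$ be $H_tA_h$-convex. Then for all $x_1<x_2<x_3$ in $I$ with $x_1(x_3-x_2)$, $x_3(x_2-x_1)$, $x_2(x_3-x_1)$ in the domain of $h$: $h(x_1(x_3-x_2))f(x_1)+h(x_3(x_2-x_1))f(x_3)\ge h(x_2(x_3-x_1))f(x_2)$. -/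
/-!
The middle point `x₂` is the weighted harmonic mean `x₁ x₃ / (t x₁ + (1 - t) x₃)` for
`t = x₃ (x₂ - x₁) / (x₂ (x₃ - x₁))`. Apply `H_tA_h`-convexity at this `t`, multiply by
`h (x₂ (x₃ - x₁))`, and absorb the factors by supermultiplicativity, using
`x₂ (x₃ - x₁) t = x₃ (x₂ - x₁)` and `x₂ (x₃ - x₁) (1 - t) = x₁ (x₃ - x₂)`.
-/

open Real Set

noncomputable def harmonicWeight (a b x : ℝ) : ℝ := b * (x - a) / (x * (b - a))

section harmonicWeight

variable {a b x : ℝ}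

lemma harmonicWeight_mem_Ioo (ha : 0 < a) (hax : a < x) (hxb : x < b) :
    harmonicWeight a b x ∈ Ioo 0 1 := by
  have hx : 0 < x := ha.trans hax
  have hden : 0 < x * (b - a) := mul_pos hx (by linarith)
  refine ⟨div_pos (mul_pos (hx.trans hxb) (by linarith)) hden, (div_lt_one hden).2 ?_⟩
  nlinarith

lemma mul_harmonicWeight (hx : x ≠ 0) (hab : a ≠ b) :
    x * (b - a) * harmonicWeight a b x = b * (x - a) :=
  mul_div_cancel₀ _ (mul_ne_zero hx (sub_ne_zero.2 hab.symm))

lemma mul_one_sub_harmonicWeight (hx : x ≠ 0) (hab : a ≠ b) :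
    x * (b - a) * (1 - harmonicWeight a b x) = a * (b - x) := by
  rw [mul_one_sub, mul_harmonicWeight hx hab]
  ring

lemma harmonicMean_harmonicWeight (ha : a ≠ 0) (hb : b ≠ 0) (hx : x ≠ 0) (hab : a ≠ b) :
    a * b / (harmonicWeight a b x * a + (1 - harmonicWeight a b x) * b) = x := by
  have hden : harmonicWeight a b x * a + (1 - harmonicWeight a b x) * b = a * b / x := by
    have hba : b - a ≠ 0 := sub_ne_zero.2 hab.symm
    unfold harmonicWeight
    field_simp
    ring
  rw [hden, div_div_cancel₀ (mul_ne_zero ha hb)]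

end harmonicWeight

lemma mul_le_of_supermultiplicative {h : ℝ → ℝ}
    (hsuper : ∀ x > (0:ℝ), ∀ y > (0:ℝ), h x * h y ≤ h (x * y))
    {c s t y u v : ℝ} (hc : 0 < c) (hhc : 0 ≤ h c) (hs : 0 < s) (ht : 0 < t)
    (hu : 0 ≤ u) (hv : 0 ≤ v) (hy : y ≤ h s * u + h t * v) :
    h c * y ≤ h (c * s) * u + h (c * t) * v :=
  calc h c * y ≤ h c * (h s * u + h t * v) := mul_le_mul_of_nonneg_left hy hhc
    _ = h c * h s * u + h c * h t * v := by ring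
    _ ≤ h (c * s) * u + h (c * t) * v := by
      gcongr
      exacts [hsuper c hc s hs, hsuper c hc t ht]

theorem HtAh_three_point_inequality (I : Set ℝ) (hI : I ⊆ Ioi 0)
    (h : ℝ → ℝ) (hpos : ∀ t > (0:ℝ), 0 < h t)
    (hsuper : ∀ x > (0:ℝ), ∀ y > (0:ℝ), h x * h y ≤ h (x * y))
    (f : ℝ → ℝ) (hfpos : ∀ x ∈ I, 0 < f x)
    (hconv : ∀ a ∈ I, ∀ b ∈ I, ∀ t ∈ Icc (0:ℝ) 1,
      f (a * b / (t * a + (1 - t) * b)) ≤ h (1 - t) * f a + h t * f b) :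
    ∀ x₁ ∈ I, ∀ x₂ ∈ I, ∀ x₃ ∈ I, x₁ < x₂ → x₂ < x₃ →
      h (x₂ * (x₃ - x₁)) * f x₂ ≤
        h (x₁ * (x₃ - x₂)) * f x₁ + h (x₃ * (x₂ - x₁)) * f x₃ := by
  intro x₁ hx₁ x₂ hx₂ x₃ hx₃ h12 h23
  have hx₁pos : 0 < x₁ := hI hx₁
  have hx₂pos : 0 < x₂ := hI hx₂
  have hx₃pos : 0 < x₃ := hI hx₃
  have h13 : x₁ ≠ x₃ := (h12.trans h23).ne
  have hc : 0 < x₂ * (x₃ - x₁) := mul_pos hx₂pos (by linarith)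
  obtain ⟨ht₀, ht₁⟩ := harmonicWeight_mem_Ioo hx₁pos h12 h23
  have key := hconv x₁ hx₁ x₃ hx₃ (harmonicWeight x₁ x₃ x₂) ⟨ht₀.le, ht₁.le⟩
  rw [harmonicMean_harmonicWeight hx₁pos.ne' hx₃pos.ne' hx₂pos.ne' h13] at key
  have := mul_le_of_supermultiplicative hsuper hc (hpos _ hc).le (sub_pos.2 ht₁) ht₀
    (hfpos x₁ hx₁).le (hfpos x₃ hx₃).le key
  rwa [mul_one_sub_harmonicWeight hx₂pos.ne' h13, mul_harmonicWeight hx₂pos.ne' h13] at this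
end

section
/- Let $h$ be supermultiplicative with $h(1)\le 1$ (or as needed for the induction), $w_1,\dots,w_n>0$, $W_n=\sum_{k=1}^n w_k$, and let $f:I\to(0,\infty)$ be $A_tG_h$-convex. Then $f\Big(\frac{1}{W_n}\sum_{k=1}^n w_k x_k\Big)\le \prod_{k=1}^n f(x_k)^{h(w_k/W_n)}$ for all $x_1,\dots,x_n\in I$, $n\ge 2$. -/
/-!
Induction on the number of points. The weighted mean of `n + 1` points is the two-point mean
of the mean `r` of the first `n` points (weight `W'`) and the last point (weight `wₗ`), so the
two-point inequality gives `f (x̄) ≤ f r ^ h (W' / W) * f (xₗ) ^ h (wₗ / W)`. Raising the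
induction hypothesis for `f r` to the power `h (W' / W)` merges the exponents into
`h (wₖ / W') * h (W' / W)`, which supermultiplicativity bounds by `h (wₖ / W)`; since `f ≥ 1`,
larger exponents only increase the product.
-/

open Real Set Finset

def AtGhConvexOn (I : Set ℝ) (h f : ℝ → ℝ) : Prop :=
  ∀ a ∈ I, ∀ b ∈ I, ∀ t ∈ Icc (0:ℝ) 1,
    f (t * a + (1 - t) * b) ≤ f a ^ h t * f b ^ h (1 - t)

lemma div_mem_Ioc_of_le {a b : ℝ} (ha : 0 < a) (hab : a ≤ b) : a / b ∈ Ioc (0:ℝ) 1 :=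
  ⟨div_pos ha (ha.trans_le hab), div_le_one_of_le₀ hab (ha.le.trans hab)⟩

lemma Convex.sum_mul_div_sum_mem {ι : Type*} {I : Set ℝ} (hI : Convex ℝ I) {s : Finset ι}
    (hs : s.Nonempty) {w x : ι → ℝ} (hw : ∀ k ∈ s, 0 < w k) (hx : ∀ k ∈ s, x k ∈ I) :
    (∑ k ∈ s, w k * x k) / (∑ k ∈ s, w k) ∈ I := by
  have hW : 0 < ∑ k ∈ s, w k := sum_pos hw hs
  simpa [Finset.centerMass, smul_eq_mul, div_eq_inv_mul] using
    hI.centerMass_mem (fun k hk => (hw k hk).le) hW hx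

lemma prod_rpow_rpow_le_prod_rpow {ι : Type*} (s : Finset ι) {y a e : ι → ℝ} {b : ℝ}
    (hy : ∀ k ∈ s, 1 ≤ y k) (hae : ∀ k ∈ s, a k * b ≤ e k) :
    (∏ k ∈ s, y k ^ a k) ^ b ≤ ∏ k ∈ s, y k ^ e k := by
  have hy0 : ∀ k ∈ s, 0 ≤ y k := fun k hk => zero_le_one.trans (hy k hk)
  calc (∏ k ∈ s, y k ^ a k) ^ b = ∏ k ∈ s, y k ^ (a k * b) := by
        rw [← Real.finsetProd_rpow s _ fun k hk => rpow_nonneg (hy0 k hk) _]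
        exact prod_congr rfl fun k hk => (rpow_mul (hy0 k hk) _ _).symm
    _ ≤ ∏ k ∈ s, y k ^ e k :=
        prod_le_prod (fun k hk => rpow_nonneg (hy0 k hk) _)
          fun k hk => rpow_le_rpow_of_exponent_le (hy k hk) (hae k hk)

lemma prod_rpow_rpow_le_of_supermul {ι : Type*} {h : ℝ → ℝ}
    (hsuper : ∀ x ∈ Ioc (0:ℝ) 1, ∀ y ∈ Ioc (0:ℝ) 1, h x * h y ≤ h (x * y))
    (s : Finset ι) {y w : ι → ℝ} (hy : ∀ k ∈ s, 1 ≤ y k) (hw : ∀ k ∈ s, 0 < w k)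
    {W : ℝ} (hW : ∑ k ∈ s, w k ≤ W) :
    (∏ k ∈ s, y k ^ h (w k / ∑ k ∈ s, w k)) ^ h ((∑ k ∈ s, w k) / W) ≤
      ∏ k ∈ s, y k ^ h (w k / W) := by
  refine prod_rpow_rpow_le_prod_rpow s hy fun k hk => ?_
  have hwk : w k ≤ ∑ k ∈ s, w k := single_le_sum (fun i hi => (hw i hi).le) hk
  have hW' : 0 < ∑ k ∈ s, w k := (hw k hk).trans_le hwk
  have hsplit : w k / (∑ k ∈ s, w k) * ((∑ k ∈ s, w k) / W) = w k / W := by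
    field_simp
  exact hsplit ▸ hsuper _ (div_mem_Ioc_of_le (hw k hk) hwk) _ (div_mem_Ioc_of_le hW' hW)

section AtGhConvexOn

variable {I : Set ℝ} {h f : ℝ → ℝ}

lemma AtGhConvexOn.le_two_point (hf : AtGhConvexOn I h f) {a b p q : ℝ} (ha : a ∈ I)
    (hb : b ∈ I) (hp : 0 < p) (hq : 0 < q) :
    f ((p * a + q * b) / (p + q)) ≤ f a ^ h (p / (p + q)) * f b ^ h (q / (p + q)) := by
  have ht : p / (p + q) ∈ Icc (0:ℝ) 1 :=
    Ioc_subset_Icc_self (div_mem_Ioc_of_le hp (le_add_of_nonneg_right hq.le))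
  have h1t : 1 - p / (p + q) = q / (p + q) := by field_simp; ring
  have hmean : p / (p + q) * a + q / (p + q) * b = (p * a + q * b) / (p + q) := by field_simp
  simpa only [h1t, hmean] using hf a ha b hb _ ht

theorem AtGhConvexOn.jensen_fin (hf : AtGhConvexOn I h f) (hI : Convex ℝ I)
    (hpos : ∀ t ∈ Ioc (0:ℝ) 1, 0 < h t)
    (hsuper : ∀ x ∈ Ioc (0:ℝ) 1, ∀ y ∈ Ioc (0:ℝ) 1, h x * h y ≤ h (x * y))
    (hfge : ∀ x ∈ I, 1 ≤ f x) (n : ℕ) {w x : Fin (n + 2) → ℝ} (hw : ∀ k, 0 < w k)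
    (hx : ∀ k, x k ∈ I) :
    f ((∑ k, w k * x k) / (∑ k, w k)) ≤ ∏ k, f (x k) ^ h (w k / (∑ k, w k)) := by
  induction n with
  | zero =>
    rw [Fin.sum_univ_two, Fin.sum_univ_two, Fin.prod_univ_two]
    exact hf.le_two_point (hx 0) (hx 1) (hw 0) (hw 1)
  | succ n ih =>
    set w' : Fin (n + 2) → ℝ := fun k => w k.castSucc
    set x' : Fin (n + 2) → ℝ := fun k => x k.castSucc
    set W' := ∑ k, w' k
    set r := (∑ k, w' k * x' k) / W'
    set W := W' + w (Fin.last _)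
    have hW' : 0 < W' := sum_pos (fun k _ => hw _) univ_nonempty
    have hr : r ∈ I := hI.sum_mul_div_sum_mem univ_nonempty (fun k _ => hw _) fun k _ => hx _
    have hW'W : W' ≤ W := le_add_of_nonneg_right (hw _).le
    have hr_pow : f r ^ h (W' / W) ≤ ∏ k, f (x' k) ^ h (w' k / W) :=
      (rpow_le_rpow (zero_le_one.trans (hfge r hr)) (ih (fun _ => hw _) fun _ => hx _)
        (hpos _ (div_mem_Ioc_of_le hW' hW'W)).le).trans
      (prod_rpow_rpow_le_of_supermul hsuper _ (fun k _ => hfge _ (hx _)) (fun k _ => hw _) hW'W)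
    have hsum : ∑ k, w k * x k = W' * r + w (Fin.last _) * x (Fin.last _) := by
      rw [Fin.sum_univ_castSucc, mul_div_cancel₀ _ hW'.ne']
    rw [hsum, show ∑ k, w k = W from Fin.sum_univ_castSucc w, Fin.prod_univ_castSucc]
    calc f ((W' * r + w (Fin.last _) * x (Fin.last _)) / W)
        ≤ f r ^ h (W' / W) * f (x (Fin.last _)) ^ h (w (Fin.last _) / W) :=
          hf.le_two_point hr (hx _) hW' (hw _)
      _ ≤ _ := mul_le_mul_of_nonneg_right hr_pow
          (rpow_nonneg (zero_le_one.trans (hfge _ (hx _))) _)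

end AtGhConvexOn

theorem jensen_AtGh_general (I : Set ℝ) (hIconv : Convex ℝ I)
    (h : ℝ → ℝ) (hpos : ∀ t ∈ Ioc (0:ℝ) 1, 0 < h t)
    (hsuper : ∀ x ∈ Ioc (0:ℝ) 1, ∀ y ∈ Ioc (0:ℝ) 1, h x * h y ≤ h (x * y))
    (f : ℝ → ℝ) (hfge : ∀ x ∈ I, 1 ≤ f x)
    (hconv : ∀ a ∈ I, ∀ b ∈ I, ∀ t ∈ Icc (0:ℝ) 1,
      f (t * a + (1 - t) * b) ≤ f a ^ h t * f b ^ h (1 - t))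
    (n : ℕ) (hn : 2 ≤ n) (w : Fin n → ℝ) (hw : ∀ k, 0 < w k)
    (x : Fin n → ℝ) (hx : ∀ k, x k ∈ I) :
    f ((∑ k, w k * x k) / (∑ k, w k)) ≤
      ∏ k, f (x k) ^ h (w k / (∑ k, w k)) := by
  obtain ⟨m, rfl⟩ : ∃ m, n = m + 2 := ⟨n - 2, by omega⟩
  exact AtGhConvexOn.jensen_fin hconv hIconv hpos hsuper hfge m hw hx

theorem jensen_AtGh (I : Set ℝ) (hI : I ⊆ Ioi 0) (hIconv : Convex ℝ I)
    (h : ℝ → ℝ) (hpos : ∀ t ∈ Ioc (0:ℝ) 1, 0 < h t)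
    (hsuper : ∀ x ∈ Ioc (0:ℝ) 1, ∀ y ∈ Ioc (0:ℝ) 1, h x * h y ≤ h (x * y))
    (f : ℝ → ℝ) (hfge : ∀ x ∈ I, 1 ≤ f x)
    (hconv : ∀ a ∈ I, ∀ b ∈ I, ∀ t ∈ Icc (0:ℝ) 1,
      f (t * a + (1 - t) * b) ≤ f a ^ h t * f b ^ h (1 - t))
    (n : ℕ) (hn : 2 ≤ n) (w : Fin n → ℝ) (hw : ∀ k, 0 < w k)
    (x : Fin n → ℝ) (hx : ∀ k, x k ∈ I) :
    f ((∑ k, w k * x k) / (∑ k, w k)) ≤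
      ∏ k, f (x k) ^ h (w k / (∑ k, w k)) :=
  jensen_AtGh_general I hIconv h hpos hsuper f hfge hconv n hn w hw x hx
end

section
/- Let $h$ be supermultiplicative, $w_1,\dots,w_n>0$ with $W_n=\sum_{k=1}^n w_k$, and let $f:I\to(0,\infty)$ be $G_tA_h$-convex. Then $f\Big(\prod_{k=1}^n x_k^{w_k/W_n}\Big)\le \sum_{k=1}^n h(w_k/W_n) f(x_k)$ for all $x_1,\dots,x_n\in I$, $n\ge 2$. -/
/-!
Induction on the number of points. Splitting one point off, the weighted geometric mean of
`x_i` and of the remaining points is a two-point geometric mean `G^t x_i^(1-t)`, to which the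
`G_tA_h`-convexity applies directly. The induction hypothesis is carried in the scaled form
`h c · f(G) ≤ ∑ h(c w_k / W) f(x_k)` for `c ∈ (0, 1]`; supermultiplicativity `h c · h t ≤ h (c t)`
absorbs the factor `h t` of each step into the weights, and this scaled form also holds for a
single point, so the induction can start there even though the unscaled inequality cannot.
-/

open Real Set Finset

noncomputable def weightedGeomMean {ι : Type*} (s : Finset ι) (w x : ι → ℝ) : ℝ :=
  ∏ k ∈ s, x k ^ (w k / ∑ j ∈ s, w j)

def IsGeomMeanClosed (I : Set ℝ) : Prop :=
  ∀ a ∈ I, ∀ b ∈ I, ∀ t ∈ Icc (0 : ℝ) 1, a ^ t * b ^ (1 - t) ∈ I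

def IsGAhConvexOn (h : ℝ → ℝ) (I : Set ℝ) (f : ℝ → ℝ) : Prop :=
  ∀ a ∈ I, ∀ b ∈ I, ∀ t ∈ Icc (0 : ℝ) 1, f (a ^ t * b ^ (1 - t)) ≤ h t * f a + h (1 - t) * f b

lemma div_sum_mem_Ioc {ι : Type*} {s : Finset ι} {w : ι → ℝ} (hw : ∀ k ∈ s, 0 < w k)
    {i : ι} (hi : i ∈ s) : w i / ∑ k ∈ s, w k ∈ Ioc (0 : ℝ) 1 :=
  ⟨div_pos (hw i hi) (sum_pos hw ⟨i, hi⟩),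
    (div_le_one (sum_pos hw ⟨i, hi⟩)).2 (single_le_sum (fun k hk ↦ (hw k hk).le) hi)⟩

lemma sum_div_sum_cons_mem_Ioc {ι : Type*} {s : Finset ι} {i : ι} {w : ι → ℝ} (hs : s.Nonempty)
    (hi : i ∉ s) (hw : ∀ k ∈ s.cons i hi, 0 < w k) :
    (∑ k ∈ s, w k) / ∑ k ∈ s.cons i hi, w k ∈ Ioc (0 : ℝ) 1 := by
  have hs_pos : 0 < ∑ k ∈ s, w k := sum_pos (fun k hk ↦ hw k (mem_cons_of_mem hk)) hs
  have hi_pos : 0 < w i := hw i (mem_cons_self i s)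
  rw [sum_cons]
  exact ⟨by positivity, (div_le_one (by positivity)).2 (by linarith)⟩

namespace weightedGeomMean

variable {ι : Type*} {s : Finset ι} {i : ι} {w x : ι → ℝ}

@[simp]
lemma singleton (hw : w i ≠ 0) : weightedGeomMean {i} w x = x i := by
  simp [weightedGeomMean, div_self hw]

lemma cons (hi : i ∉ s) (hx : ∀ k ∈ s, 0 ≤ x k) (hs : ∑ k ∈ s, w k ≠ 0)
    (hW : ∑ k ∈ s.cons i hi, w k ≠ 0) :
    weightedGeomMean (s.cons i hi) w x =
      weightedGeomMean s w x ^ ((∑ k ∈ s, w k) / ∑ k ∈ s.cons i hi, w k) *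
        x i ^ (1 - (∑ k ∈ s, w k) / ∑ k ∈ s.cons i hi, w k) := by
  rw [sum_cons] at hW ⊢
  rw [weightedGeomMean, weightedGeomMean, prod_cons, sum_cons, mul_comm,
    ← finsetProd_rpow s _ fun k hk ↦ rpow_nonneg (hx k hk) _]
  congr 1
  · refine prod_congr rfl fun k hk ↦ ?_
    rw [← rpow_mul (hx k hk)]
    congr 1
    field_simp
  · congr 1
    field_simp
    ring

lemma mem {I : Set ℝ} (hI : I ⊆ Ioi 0) (hIgeo : IsGeomMeanClosed I) (hs : s.Nonempty)
    (hw : ∀ k ∈ s, 0 < w k) (hx : ∀ k ∈ s, x k ∈ I) : weightedGeomMean s w x ∈ I := by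
  induction hs using Nonempty.cons_induction with
  | singleton j => simpa [(hw j (mem_singleton_self j)).ne'] using hx j (mem_singleton_self j)
  | cons j s hj hs ih =>
    have hw' : ∀ k ∈ s, 0 < w k := fun k hk ↦ hw k (mem_cons_of_mem hk)
    rw [cons hj (fun k hk ↦ (hI (hx k (mem_cons_of_mem hk))).le) (sum_pos hw' hs).ne'
      (sum_pos hw (cons_nonempty hj)).ne']
    exact hIgeo _ (ih hw' fun k hk ↦ hx k (mem_cons_of_mem hk)) _ (hx j (mem_cons_self j s)) _
      (Set.Ioc_subset_Icc_self (sum_div_sum_cons_mem_Ioc hs hj hw))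

end weightedGeomMean

namespace IsGAhConvexOn

variable {ι : Type*} {h f : ℝ → ℝ} {I : Set ℝ} {s : Finset ι} {i : ι} {w x : ι → ℝ}

lemma map_weightedGeomMean_cons_le (hf : IsGAhConvexOn h I f) (hI : I ⊆ Ioi 0)
    (hIgeo : IsGeomMeanClosed I)
    (hs : s.Nonempty) (hi : i ∉ s) (hw : ∀ k ∈ s.cons i hi, 0 < w k)
    (hx : ∀ k ∈ s.cons i hi, x k ∈ I) :
    f (weightedGeomMean (s.cons i hi) w x) ≤
      h ((∑ k ∈ s, w k) / ∑ k ∈ s.cons i hi, w k) * f (weightedGeomMean s w x) +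
        h (w i / ∑ k ∈ s.cons i hi, w k) * f (x i) := by
  have hw' : ∀ k ∈ s, 0 < w k := fun k hk ↦ hw k (mem_cons_of_mem hk)
  have hx' : ∀ k ∈ s, x k ∈ I := fun k hk ↦ hx k (mem_cons_of_mem hk)
  have hW : ∑ k ∈ s.cons i hi, w k ≠ 0 := (sum_pos hw (cons_nonempty hi)).ne'
  have hcompl : 1 - (∑ k ∈ s, w k) / ∑ k ∈ s.cons i hi, w k = w i / ∑ k ∈ s.cons i hi, w k := by
    rw [sum_cons] at hW ⊢
    field_simp
    ring
  rw [weightedGeomMean.cons hi (fun k hk ↦ (hI (hx' k hk)).le) (sum_pos hw' hs).ne' hW, ← hcompl]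
  exact hf _ (weightedGeomMean.mem hI hIgeo hs hw' hx') _ (hx i (mem_cons_self i s)) _
    (Set.Ioc_subset_Icc_self (sum_div_sum_cons_mem_Ioc hs hi hw))

lemma mul_map_weightedGeomMean_le_sum (hf : IsGAhConvexOn h I f) (hI : I ⊆ Ioi 0)
    (hIgeo : IsGeomMeanClosed I) (hh : ∀ t ∈ Ioc (0 : ℝ) 1, 0 ≤ h t)
    (hsuper : ∀ a ∈ Ioc (0 : ℝ) 1, ∀ b ∈ Ioc (0 : ℝ) 1, h a * h b ≤ h (a * b))
    (hf₀ : ∀ y ∈ I, 0 ≤ f y) (hs : s.Nonempty) (hw : ∀ k ∈ s, 0 < w k)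
    (hx : ∀ k ∈ s, x k ∈ I) {c : ℝ} (hc : c ∈ Ioc (0 : ℝ) 1) :
    h c * f (weightedGeomMean s w x) ≤ ∑ k ∈ s, h (c * (w k / ∑ j ∈ s, w j)) * f (x k) := by
  induction hs using Nonempty.cons_induction generalizing c with
  | singleton j => simp [(hw j (mem_singleton_self j)).ne']
  | cons i s hi hs ih =>
    have hw' : ∀ k ∈ s, 0 < w k := fun k hk ↦ hw k (mem_cons_of_mem hk)
    have hx' : ∀ k ∈ s, x k ∈ I := fun k hk ↦ hx k (mem_cons_of_mem hk)
    have hi_mem : i ∈ s.cons i hi := mem_cons_self i s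
    set W := ∑ k ∈ s.cons i hi, w k
    set t := (∑ k ∈ s, w k) / W
    have ht : t ∈ Ioc (0 : ℝ) 1 := sum_div_sum_cons_mem_Ioc hs hi hw
    have hc_mul {a : ℝ} (ha : a ∈ Ioc (0 : ℝ) 1) : c * a ∈ Ioc (0 : ℝ) 1 :=
      ⟨mul_pos hc.1 ha.1, mul_le_one₀ hc.2 ha.1.le ha.2⟩
    have hfG := hf₀ _ (weightedGeomMean.mem hI hIgeo hs hw' hx')
    have hfxi := hf₀ _ (hx i hi_mem)
    have hwi := div_sum_mem_Ioc hw hi_mem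
    calc h c * f (weightedGeomMean (s.cons i hi) w x)
        ≤ h c * (h t * f (weightedGeomMean s w x) + h (w i / W) * f (x i)) :=
          mul_le_mul_of_nonneg_left (hf.map_weightedGeomMean_cons_le hI hIgeo hs hi hw hx)
            (hh c hc)
      _ = h c * h t * f (weightedGeomMean s w x) + h c * h (w i / W) * f (x i) := by ring
      _ ≤ h (c * t) * f (weightedGeomMean s w x) + h (c * (w i / W)) * f (x i) := by
          gcongr
          · exact hsuper c hc t ht
          · exact hsuper c hc _ hwi
      _ ≤ ∑ k ∈ s, h (c * t * (w k / ∑ j ∈ s, w j)) * f (x k) + h (c * (w i / W)) * f (x i) := by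
          gcongr
          exact ih hw' hx' (hc_mul ht)
      _ = ∑ k ∈ s.cons i hi, h (c * (w k / W)) * f (x k) := by
          rw [sum_cons, add_comm]
          simp only [t, mul_assoc, div_mul_div_cancel₀' (sum_pos hw' hs).ne']

lemma map_weightedGeomMean_cons_le_sum (hf : IsGAhConvexOn h I f) (hI : I ⊆ Ioi 0)
    (hIgeo : IsGeomMeanClosed I) (hh : ∀ t ∈ Ioc (0 : ℝ) 1, 0 ≤ h t)
    (hsuper : ∀ a ∈ Ioc (0 : ℝ) 1, ∀ b ∈ Ioc (0 : ℝ) 1, h a * h b ≤ h (a * b))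
    (hf₀ : ∀ y ∈ I, 0 ≤ f y) (hs : s.Nonempty) (hi : i ∉ s) (hw : ∀ k ∈ s.cons i hi, 0 < w k)
    (hx : ∀ k ∈ s.cons i hi, x k ∈ I) :
    f (weightedGeomMean (s.cons i hi) w x) ≤
      ∑ k ∈ s.cons i hi, h (w k / ∑ j ∈ s.cons i hi, w j) * f (x k) := by
  have hw' : ∀ k ∈ s, 0 < w k := fun k hk ↦ hw k (mem_cons_of_mem hk)
  have hx' : ∀ k ∈ s, x k ∈ I := fun k hk ↦ hx k (mem_cons_of_mem hk)
  set W := ∑ k ∈ s.cons i hi, w k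
  have ht : (∑ k ∈ s, w k) / W ∈ Ioc (0 : ℝ) 1 := sum_div_sum_cons_mem_Ioc hs hi hw
  calc f (weightedGeomMean (s.cons i hi) w x)
      ≤ h ((∑ k ∈ s, w k) / W) * f (weightedGeomMean s w x) + h (w i / W) * f (x i) :=
        hf.map_weightedGeomMean_cons_le hI hIgeo hs hi hw hx
    _ ≤ ∑ k ∈ s, h ((∑ k ∈ s, w k) / W * (w k / ∑ j ∈ s, w j)) * f (x k) +
          h (w i / W) * f (x i) := by
        gcongr
        exact hf.mul_map_weightedGeomMean_le_sum hI hIgeo hh hsuper hf₀ hs hw' hx' ht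
    _ = ∑ k ∈ s.cons i hi, h (w k / W) * f (x k) := by
        rw [sum_cons, add_comm]
        simp only [div_mul_div_cancel₀' (sum_pos hw' hs).ne']

theorem map_weightedGeomMean_le_sum (hf : IsGAhConvexOn h I f) (hI : I ⊆ Ioi 0)
    (hIgeo : IsGeomMeanClosed I) (hh : ∀ t ∈ Ioc (0 : ℝ) 1, 0 ≤ h t)
    (hsuper : ∀ a ∈ Ioc (0 : ℝ) 1, ∀ b ∈ Ioc (0 : ℝ) 1, h a * h b ≤ h (a * b))
    (hf₀ : ∀ y ∈ I, 0 ≤ f y) (hs : s.Nontrivial) (hw : ∀ k ∈ s, 0 < w k)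
    (hx : ∀ k ∈ s, x k ∈ I) :
    f (weightedGeomMean s w x) ≤ ∑ k ∈ s, h (w k / ∑ j ∈ s, w j) * f (x k) := by
  obtain ⟨t, i, hit, j, hjt, hij, rfl⟩ := hs.exists_cons_eq
  exact hf.map_weightedGeomMean_cons_le_sum hI hIgeo hh hsuper hf₀ (cons_nonempty hjt) _ hw hx

end IsGAhConvexOn

theorem jensen_GtAh (I : Set ℝ) (hI : I ⊆ Ioi 0)
    (hIgeo : ∀ a ∈ I, ∀ b ∈ I, ∀ t ∈ Icc (0:ℝ) 1, a ^ t * b ^ (1 - t) ∈ I)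
    (h : ℝ → ℝ) (hpos : ∀ t ∈ Ioc (0:ℝ) 1, 0 < h t)
    (hsuper : ∀ x ∈ Ioc (0:ℝ) 1, ∀ y ∈ Ioc (0:ℝ) 1, h x * h y ≤ h (x * y))
    (f : ℝ → ℝ) (hfpos : ∀ x ∈ I, 0 < f x)
    (hconv : ∀ a ∈ I, ∀ b ∈ I, ∀ t ∈ Icc (0:ℝ) 1,
      f (a ^ t * b ^ (1 - t)) ≤ h t * f a + h (1 - t) * f b)
    (n : ℕ) (hn : 2 ≤ n) (w : Fin n → ℝ) (hw : ∀ k, 0 < w k)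
    (x : Fin n → ℝ) (hx : ∀ k, x k ∈ I) :
    f (∏ k, x k ^ (w k / (∑ k, w k))) ≤
      ∑ k, h (w k / (∑ k, w k)) * f (x k) := by
  have : Nontrivial (Fin n) := Fin.nontrivial_iff_two_le.2 hn
  exact IsGAhConvexOn.map_weightedGeomMean_le_sum hconv hI hIgeo (fun t ht ↦ (hpos t ht).le)
    hsuper (fun y hy ↦ (hfpos y hy).le) univ_nontrivial (fun k _ ↦ hw k) fun k _ ↦ hx k
end
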